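/- arXiv:2507.03786 — 2 statements merged into one kernel-verified Lean document; each statement's English description precedes it below -/
import Mathlib

section
/- Let k be an integer, I and H multigraphs on the finite set V, U ⊆ V, and let f and P be as defined. Let x be an extreme point of P with 0 < x_e < 1 for every e ∈ E, where E ≠ ∅, and suppose that no laminar x-defining family exists. Then there are f-positive x-tight cuts A and B that cross and such that: (i) A∩B = {u} or V\(A∪B) = {u} for some u ∈ U, and (ii) A\B = {v} or B\A = {v} for some v ∈ U. -/
open Finset

variable {V : Type*} [Fintype V] [DecidableEq V] {E : Type*} [Fintype E] [DecidableEq E]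

/-- `d_m(S,T)`: total multiplicity of edges of the multigraph `m` with one end in `S` and
the other in `T` (for disjoint `S`, `T`). -/
def dBetween (m : V → V → ℕ) (S T : Finset V) : ℕ := ∑ u ∈ S, ∑ v ∈ T, m u v

/-- `d_m(S) = d_m(S, V \ S)`. -/
def degS (m : V → V → ℕ) (S : Finset V) : ℕ := dBetween m S Sᶜ

/-- Edges of the edge-indexed multigraph `(V, E)` (endpoint map `ends`) with exactly one
endpoint in `S`. -/
def cutEdges (ends : E → V × V) (S : Finset V) : Finset E :=
  univ.filter fun e => ((ends e).1 ∈ S ∧ (ends e).2 ∉ S) ∨ ((ends e).1 ∉ S ∧ (ends e).2 ∈ S)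

/-- A cut is a nonempty proper subset of `V`. -/
def IsCut (S : Finset V) : Prop := S.Nonempty ∧ S ≠ univ

/-- The relaxed residual function `f`:
`f(S) = k - d_I(S) - 2 d_H(S) - 2` if `S = {u}` or `V \ S = {u}` for some `u ∈ U`,
and `f(S) = k - d_I(S) - 2 d_H(S)` otherwise. -/
def fRes (k : ℤ) (I H : V → V → ℕ) (U : Finset V) (S : Finset V) : ℤ :=
  if ∃ u ∈ U, S = {u} ∨ Sᶜ = {u} then
    k - (degS I S : ℤ) - 2 * (degS H S : ℤ) - 2
  else
    k - (degS I S : ℤ) - 2 * (degS H S : ℤ)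

/-- The polytope `P = {x ∈ [0,1]^E : x(δ_E(S)) ≥ f(S) for every cut S}`. -/
def polyP (k : ℤ) (I H : V → V → ℕ) (U : Finset V) (ends : E → V × V) : Set (E → ℝ) :=
  {x | (∀ e, 0 ≤ x e ∧ x e ≤ 1) ∧
    ∀ S : Finset V, IsCut S → (fRes k I H U S : ℝ) ≤ ∑ e ∈ cutEdges ends S, x e}

/-- A set `S` is `x`-tight if `x(δ_E(S)) = f(S)`. -/
def IsTight (k : ℤ) (I H : V → V → ℕ) (U : Finset V) (ends : E → V × V) (x : E → ℝ)
    (S : Finset V) : Prop :=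
  ∑ e ∈ cutEdges ends S, x e = (fRes k I H U S : ℝ)

/-- An `x`-core: an inclusion-minimal `f`-positive `x`-tight cut. -/
def IsCore (k : ℤ) (I H : V → V → ℕ) (U : Finset V) (ends : E → V × V) (x : E → ℝ)
    (C : Finset V) : Prop :=
  IsCut C ∧ 0 < fRes k I H U C ∧ IsTight k I H U ends x C ∧
    ∀ C' : Finset V, C' ⊂ C → IsCut C' → 0 < fRes k I H U C' →
      IsTight k I H U ends x C' → False

/-- The incidence vector `χ_{δ_E(S)} ∈ ℝ^E` of the cut edge set `δ_E(S)`. -/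
def chiCut (ends : E → V × V) (S : Finset V) : E → ℝ :=
  fun e => if e ∈ cutEdges ends S then 1 else 0

/-- A family of sets is laminar if any two members are either disjoint or nested. -/
def LaminarF {V : Type*} (F : Finset (Finset V)) : Prop :=
  ∀ A ∈ F, ∀ B ∈ F, Disjoint A B ∨ A ⊆ B ∨ B ⊆ A

/-- An `x`-defining family: a family `L` of `f`-positive `x`-tight cuts with `|L| = |E|`
whose incidence vectors `χ_{δ_E(S)}`, `S ∈ L`, are linearly independent. -/
def IsDefining (k : ℤ) (I H : V → V → ℕ) (U : Finset V) (ends : E → V × V) (x : E → ℝ)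
    (L : Finset (Finset V)) : Prop :=
  (∀ S ∈ L, IsCut S ∧ 0 < fRes k I H U S ∧ IsTight k I H U ends x S) ∧
  L.card = Fintype.card E ∧
  LinearIndependent ℝ (fun S : {A : Finset V // A ∈ L} => chiCut ends S.1)

/-- Cuts `A`, `B` cross if `A ∩ B`, `A \ B`, `B \ A` and `V \ (A ∪ B)` are all nonempty. -/
def Crosses (A B : Finset V) : Prop :=
  (A ∩ B).Nonempty ∧ (A \ B).Nonempty ∧ (B \ A).Nonempty ∧ ((A ∪ B)ᶜ).Nonempty

/-!
Jain's uncrossing argument. As `0 < x < 1`, extremality of `x` makes the incidence vectors of the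
`x`-tight cuts span `ℝ^E`; since `f(S) = f(V \ S)`, the tight cuts avoiding a fixed vertex `r`
already do. If the conclusion fails for two crossing tight cuts `A`, `B`, then the `-2` correction of
`f` is absent at `A ∩ B`, `A ∪ B` or at `A \ B`, `B \ A`, so `f` is supermodular (resp.
posimodular) on that pair while `x(δ(·))` is submodular and posimodular: the pair is tight and
`χ_A + χ_B` equals the sum of its incidence vectors. Hence a maximal linearly independent laminar
family of tight cuts avoiding `r` spans `ℝ^E`, i.e. it is a laminar `x`-defining family.
-/

open Matrix Filter Topology Submodule

section IncidenceVectors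

omit [Fintype V]

lemma chiCut_dotProduct (ends : E → V × V) (S : Finset V) (w : E → ℝ) :
    chiCut ends S ⬝ᵥ w = ∑ e ∈ cutEdges ends S, w e := by
  simp only [dotProduct, chiCut, ite_mul, one_mul, zero_mul]
  rw [sum_ite_mem, univ_inter]

lemma chiCut_inter_add_chiCut_union_le (ends : E → V × V) (A B : Finset V) :
    chiCut ends (A ∩ B) + chiCut ends (A ∪ B) ≤ chiCut ends A + chiCut ends B := by
  intro e
  by_cases h1 : (ends e).1 ∈ A <;> by_cases h2 : (ends e).1 ∈ B <;>
    by_cases h3 : (ends e).2 ∈ A <;> by_cases h4 : (ends e).2 ∈ B <;>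
    simp [chiCut, cutEdges, h1, h2, h3, h4]

lemma chiCut_sdiff_add_chiCut_sdiff_le (ends : E → V × V) (A B : Finset V) :
    chiCut ends (A \ B) + chiCut ends (B \ A) ≤ chiCut ends A + chiCut ends B := by
  intro e
  by_cases h1 : (ends e).1 ∈ A <;> by_cases h2 : (ends e).1 ∈ B <;>
    by_cases h3 : (ends e).2 ∈ A <;> by_cases h4 : (ends e).2 ∈ B <;>
    simp [chiCut, cutEdges, h1, h2, h3, h4]

variable {ends : E → V × V} {A B C D : Finset V} {w : E → ℝ}

lemma sum_cutEdges_add_le_of_chiCut_le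
    (h : chiCut ends C + chiCut ends D ≤ chiCut ends A + chiCut ends B) (hw : 0 ≤ w) :
    ∑ e ∈ cutEdges ends C, w e + ∑ e ∈ cutEdges ends D, w e
      ≤ ∑ e ∈ cutEdges ends A, w e + ∑ e ∈ cutEdges ends B, w e := by
  simp only [← chiCut_dotProduct, ← add_dotProduct]
  exact dotProduct_le_dotProduct_of_nonneg_right h hw

lemma chiCut_add_eq_of_sum_cutEdges_add_eq
    (h : chiCut ends C + chiCut ends D ≤ chiCut ends A + chiCut ends B) (hw : ∀ e, 0 < w e)
    (heq : ∑ e ∈ cutEdges ends C, w e + ∑ e ∈ cutEdges ends D, w e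
      = ∑ e ∈ cutEdges ends A, w e + ∑ e ∈ cutEdges ends B, w e) :
    chiCut ends C + chiCut ends D = chiCut ends A + chiCut ends B := by
  rw [← chiCut_dotProduct, ← chiCut_dotProduct, ← chiCut_dotProduct, ← chiCut_dotProduct,
    ← add_dotProduct, ← add_dotProduct] at heq
  have hle : ∀ e ∈ univ, (chiCut ends C + chiCut ends D) e * w e
      ≤ (chiCut ends A + chiCut ends B) e * w e :=
    fun e _ => mul_le_mul_of_nonneg_right (h e) (hw e).le
  funext e
  exact mul_right_cancel₀ (hw e).ne' ((sum_eq_sum_iff_of_le hle).1 heq e (mem_univ e))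

end IncidenceVectors

omit [DecidableEq E] in
lemma cutEdges_compl (ends : E → V × V) (S : Finset V) :
    cutEdges ends Sᶜ = cutEdges ends S := by
  ext e
  simp only [cutEdges, mem_filter, mem_univ, true_and, mem_compl]
  tauto

lemma chiCut_compl (ends : E → V × V) (S : Finset V) : chiCut ends Sᶜ = chiCut ends S := by
  unfold chiCut
  rw [cutEdges_compl]

/- `cutEdges id S` is the cut of the complete graph on `V` with one edge per ordered pair, so a
symmetric `degS m` is half a weighted cut function there. -/
lemma cutEdges_id (S : Finset V) : cutEdges id S = S ×ˢ Sᶜ ∪ Sᶜ ×ˢ S := by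
  ext p
  simp [cutEdges]

lemma two_mul_degS {m : V → V → ℕ} (hm : ∀ a b, m a b = m b a) (S : Finset V) :
    2 * degS m S = ∑ p ∈ cutEdges id S, m p.1 p.2 := by
  rw [cutEdges_id, sum_union (disjoint_product.2 (Or.inl disjoint_compl_right)),
    sum_product, sum_product_right, degS, dBetween, two_mul]
  simp only [hm]

section Degree

variable {m : V → V → ℕ} {A B C D : Finset V}

lemma degS_add_le_of_chiCut_le (hm : ∀ a b, m a b = m b a)
    (h : chiCut id C + chiCut id D ≤ chiCut id A + chiCut id B) :
    degS m C + degS m D ≤ degS m A + degS m B := by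
  have key := sum_cutEdges_add_le_of_chiCut_le h (w := fun p => (m p.1 p.2 : ℝ))
    (fun p => Nat.cast_nonneg _)
  simp only [← Nat.cast_sum, ← two_mul_degS hm, Nat.cast_mul, Nat.cast_ofNat] at key
  have : ((degS m C + degS m D : ℕ) : ℝ) ≤ (degS m A + degS m B : ℕ) := by push_cast; linarith
  exact_mod_cast this

lemma degS_compl (hm : ∀ a b, m a b = m b a) (S : Finset V) : degS m Sᶜ = degS m S := by
  have h := two_mul_degS hm Sᶜ
  rw [cutEdges_compl, ← two_mul_degS hm] at h
  omega

end Degree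

def fUnrelaxed (k : ℤ) (I H : V → V → ℕ) (S : Finset V) : ℤ :=
  k - degS I S - 2 * degS H S

section Unrelaxed

variable {k : ℤ} {I H : V → V → ℕ} {U A B C D S : Finset V}

lemma fRes_eq_fUnrelaxed (h1 : ∀ u ∈ U, S ≠ {u}) (h2 : ∀ u ∈ U, Sᶜ ≠ {u}) :
    fRes k I H U S = fUnrelaxed k I H S := by
  rw [fRes, if_neg fun ⟨u, hu, h⟩ => h.elim (h1 u hu) (h2 u hu), fUnrelaxed]

lemma fRes_compl (hI : ∀ a b, I a b = I b a) (hH : ∀ a b, H a b = H b a) (S : Finset V) :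
    fRes k I H U Sᶜ = fRes k I H U S := by
  simp only [fRes, degS_compl hI, degS_compl hH, compl_compl, or_comm]

lemma fUnrelaxed_add_le_of_chiCut_le (hI : ∀ a b, I a b = I b a) (hH : ∀ a b, H a b = H b a)
    (h : chiCut id C + chiCut id D ≤ chiCut id A + chiCut id B) :
    fUnrelaxed k I H A + fUnrelaxed k I H B ≤ fUnrelaxed k I H C + fUnrelaxed k I H D := by
  have hdI := degS_add_le_of_chiCut_le hI h
  have hdH := degS_add_le_of_chiCut_le hH h
  simp only [fUnrelaxed]
  omega

end Unrelaxed

lemma IsCut.compl {S : Finset V} (h : IsCut S) : IsCut Sᶜ :=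
  ⟨by simpa [nonempty_iff_ne_empty, compl_eq_empty_iff] using h.2,
    (compl_ne_univ_iff_nonempty S).2 h.1⟩

section Tight

variable {k : ℤ} {I H : V → V → ℕ} {U : Finset V} {ends : E → V × V} {x : E → ℝ}
  {A B C D S : Finset V}

omit [DecidableEq E] in
lemma IsTight.compl (hI : ∀ a b, I a b = I b a) (hH : ∀ a b, H a b = H b a)
    (h : IsTight k I H U ends x S) : IsTight k I H U ends x Sᶜ := by
  rwa [IsTight, cutEdges_compl, fRes_compl hI hH]

lemma fRes_pos_of_isTight (hx : ∀ e, 0 < x e) (h : IsTight k I H U ends x S)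
    (hχ : chiCut ends S ≠ 0) : 0 < fRes k I H U S := by
  have hne : (cutEdges ends S).Nonempty := by
    contrapose! hχ
    funext e
    simp [chiCut, hχ]
  exact_mod_cast h ▸ sum_pos (fun e _ => hx e) hne

lemma IsTight.uncross (hxP : x ∈ polyP k I H U ends) (hx : ∀ e, 0 < x e)
    (hA : IsTight k I H U ends x A) (hB : IsTight k I H U ends x B) (hC : IsCut C) (hD : IsCut D)
    (hχ : chiCut ends C + chiCut ends D ≤ chiCut ends A + chiCut ends B)
    (hf : fRes k I H U A + fRes k I H U B ≤ fRes k I H U C + fRes k I H U D) :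
    IsTight k I H U ends x C ∧ IsTight k I H U ends x D ∧
      chiCut ends C + chiCut ends D = chiCut ends A + chiCut ends B := by
  have hsum := sum_cutEdges_add_le_of_chiCut_le hχ fun e => (hx e).le
  have hCP := hxP.2 C hC
  have hDP := hxP.2 D hD
  have hf' : (fRes k I H U A : ℝ) + fRes k I H U B ≤ fRes k I H U C + fRes k I H U D := by
    exact_mod_cast hf
  unfold IsTight at *
  -- x(δC) + x(δD) ≤ x(δA) + x(δB) = f(A) + f(B) ≤ f(C) + f(D) ≤ x(δC) + x(δD)
  exact ⟨by linarith, by linarith, chiCut_add_eq_of_sum_cutEdges_add_eq hχ hx (by linarith)⟩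

end Tight

namespace Crosses

variable {k : ℤ} {I H : V → V → ℕ} {U A B : Finset V}

lemma symm (h : Crosses A B) : Crosses B A := by
  obtain ⟨h1, h2, h3, h4⟩ := h
  exact ⟨inter_comm A B ▸ h1, h3, h2, union_comm A B ▸ h4⟩

lemma isCut_corners (h : Crosses A B) :
    IsCut (A ∩ B) ∧ IsCut (A ∪ B) ∧ IsCut (A \ B) ∧ IsCut (B \ A) := by
  obtain ⟨h1, h2, h3, d, hd⟩ := h
  have ne_univ : ∀ S : Finset V, d ∉ S → S ≠ univ := fun S hS he => hS (he ▸ mem_univ d)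
  simp only [mem_compl, mem_union, not_or] at hd
  exact ⟨⟨h1, ne_univ _ (by simp [hd])⟩, ⟨h1.mono inter_subset_union, ne_univ _ (by simp [hd])⟩,
    ⟨h2, ne_univ _ (by simp [hd])⟩, ⟨h3, ne_univ _ (by simp [hd])⟩⟩

lemma fRes_eq (h : Crosses A B) : fRes k I H U A = fUnrelaxed k I H A := by
  obtain ⟨⟨a, ha⟩, ⟨b, hb⟩, ⟨c, hc⟩, ⟨d, hd⟩⟩ := h
  refine fRes_eq_fUnrelaxed (fun u _ => Nontrivial.ne_singleton ⟨a, ?_, b, ?_, ?_⟩)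
    (fun u _ => Nontrivial.ne_singleton ⟨c, ?_, d, ?_, ?_⟩) <;> grind [mem_compl]

lemma fRes_inter_eq (h : Crosses A B) (hU : ¬∃ u ∈ U, A ∩ B = {u} ∨ (A ∪ B)ᶜ = {u}) :
    fRes k I H U (A ∩ B) = fUnrelaxed k I H (A ∩ B) ∧
      fRes k I H U (A ∪ B) = fUnrelaxed k I H (A ∪ B) := by
  obtain ⟨⟨a, ha⟩, ⟨b, hb⟩, ⟨c, hc⟩, -⟩ := h
  push Not at hU
  refine ⟨fRes_eq_fUnrelaxed (fun u hu => (hU u hu).1)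
      (fun u _ => Nontrivial.ne_singleton ⟨b, ?_, c, ?_, ?_⟩),
    fRes_eq_fUnrelaxed (fun u _ => Nontrivial.ne_singleton ⟨a, ?_, b, ?_, ?_⟩)
      (fun u hu => (hU u hu).2)⟩ <;> grind [mem_compl]

lemma fRes_sdiff_eq (h : Crosses A B) (hU : ¬∃ v ∈ U, A \ B = {v} ∨ B \ A = {v}) :
    fRes k I H U (A \ B) = fUnrelaxed k I H (A \ B) ∧
      fRes k I H U (B \ A) = fUnrelaxed k I H (B \ A) := by
  obtain ⟨⟨a, ha⟩, ⟨b, hb⟩, ⟨c, hc⟩, -⟩ := h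
  push Not at hU
  refine ⟨fRes_eq_fUnrelaxed (fun u hu => (hU u hu).1)
      (fun u _ => Nontrivial.ne_singleton ⟨a, ?_, c, ?_, ?_⟩),
    fRes_eq_fUnrelaxed (fun u hu => (hU u hu).2)
      (fun u _ => Nontrivial.ne_singleton ⟨a, ?_, b, ?_, ?_⟩)⟩ <;> grind [mem_compl]

end Crosses

lemma IsTight.uncross_of_crosses {k : ℤ} {I H : V → V → ℕ} {U : Finset V} {ends : E → V × V}
    {x : E → ℝ} {A B : Finset V} (hI : ∀ a b, I a b = I b a) (hH : ∀ a b, H a b = H b a)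
    (hxP : x ∈ polyP k I H U ends) (hx : ∀ e, 0 < x e) (hAB : Crosses A B)
    (hA : IsTight k I H U ends x A) (hB : IsTight k I H U ends x B)
    (hU : ¬((∃ u ∈ U, A ∩ B = {u} ∨ (A ∪ B)ᶜ = {u}) ∧ (∃ v ∈ U, A \ B = {v} ∨ B \ A = {v}))) :
    (IsTight k I H U ends x (A ∩ B) ∧ IsTight k I H U ends x (A ∪ B) ∧
      chiCut ends (A ∩ B) + chiCut ends (A ∪ B) = chiCut ends A + chiCut ends B) ∨
    (IsTight k I H U ends x (A \ B) ∧ IsTight k I H U ends x (B \ A) ∧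
      chiCut ends (A \ B) + chiCut ends (B \ A) = chiCut ends A + chiCut ends B) := by
  obtain ⟨hcInter, hcUnion, hcSdiff, hcSdiff'⟩ := hAB.isCut_corners
  have hfAB : fRes k I H U A + fRes k I H U B = fUnrelaxed k I H A + fUnrelaxed k I H B := by
    rw [hAB.fRes_eq, hAB.symm.fRes_eq]
  rcases not_and_or.mp hU with hU | hU
  · obtain ⟨hfInter, hfUnion⟩ := hAB.fRes_inter_eq hU
    refine .inl (hA.uncross hxP hx hB hcInter hcUnion (chiCut_inter_add_chiCut_union_le ends A B) ?_)
    rw [hfAB, hfInter, hfUnion]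
    exact fUnrelaxed_add_le_of_chiCut_le hI hH (chiCut_inter_add_chiCut_union_le id A B)
  · obtain ⟨hfSdiff, hfSdiff'⟩ := hAB.fRes_sdiff_eq hU
    refine .inr (hA.uncross hxP hx hB hcSdiff hcSdiff' (chiCut_sdiff_add_chiCut_sdiff_le ends A B) ?_)
    rw [hfAB, hfSdiff, hfSdiff']
    exact fUnrelaxed_add_le_of_chiCut_le hI hH (chiCut_sdiff_add_chiCut_sdiff_le id A B)

def LaminarPair {α : Type*} (A B : Finset α) : Prop :=
  Disjoint A B ∨ A ⊆ B ∨ B ⊆ A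

section Laminar

variable {α : Type*} {A B S X : Finset α} {F : Finset (Finset α)}

lemma LaminarPair.symm (h : LaminarPair A B) : LaminarPair B A := by
  rcases h with h | h | h
  exacts [.inl h.symm, .inr (.inr h), .inr (.inl h)]

variable [DecidableEq α]

instance (A B : Finset α) : Decidable (LaminarPair A B) :=
  inferInstanceAs (Decidable (_ ∨ _ ∨ _))

lemma laminarF_insert (hF : LaminarF F) (hS : ∀ A ∈ F, LaminarPair A S) :
    LaminarF (insert S F) := by
  intro A hA B hB
  rcases mem_insert.1 hA with rfl | hAF <;> rcases mem_insert.1 hB with rfl | hBF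
  exacts [.inr (.inl subset_rfl), (hS B hBF).symm, hS A hAF, hF A hAF B hBF]

lemma LaminarPair.corners (hAS : ¬LaminarPair A S) (hBA : LaminarPair B A)
    (hBS : LaminarPair B S) :
    LaminarPair B (A ∩ S) ∧ LaminarPair B (A ∪ S) ∧ LaminarPair B (A \ S) ∧
      LaminarPair B (S \ A) := by
  unfold LaminarPair at *
  simp only [disjoint_left, subset_iff, mem_inter, mem_union] at *
  grind

lemma card_filter_not_laminarPair_lt (hF : LaminarF F) (hA : A ∈ F) (hAS : ¬LaminarPair A S)
    (hAX : LaminarPair A X) (hX : ∀ B, LaminarPair B A → LaminarPair B S → LaminarPair B X) :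
    #{B ∈ F | ¬LaminarPair B X} < #{B ∈ F | ¬LaminarPair B S} := by
  refine lt_of_le_of_lt (card_le_card fun B hB => ?_) (card_erase_lt_of_mem (a := A) ?_)
  · obtain ⟨hBF, hBX⟩ := mem_filter.1 hB
    refine mem_erase.2 ⟨?_, mem_filter.2 ⟨hBF, fun hBS => hBX (hX B (hF B hBF A hA) hBS)⟩⟩
    rintro rfl
    exact hBX hAX
  · exact mem_filter.2 ⟨hA, hAS⟩

theorem exists_laminarF_linearIndepOn_forall_mem_span [Fintype α] {K M : Type*} [DivisionRing K]
    [AddCommGroup M] [Module K M] (T : Finset α → Prop) (χ : Finset α → M)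
    (huncross : ∀ A B, T A → T B → χ A ≠ 0 → χ B ≠ 0 → ¬LaminarPair A B →
      (T (A ∩ B) ∧ T (A ∪ B) ∧ χ (A ∩ B) + χ (A ∪ B) = χ A + χ B) ∨
      (T (A \ B) ∧ T (B \ A) ∧ χ (A \ B) + χ (B \ A) = χ A + χ B)) :
    ∃ F : Finset (Finset α), (∀ S ∈ F, T S) ∧ LaminarF F ∧ LinearIndepOn K χ (F : Set (Finset α)) ∧
      ∀ S, T S → χ S ∈ span K (χ '' F) := by
  classical
  obtain ⟨F, hFmem, hFmax⟩ := exists_max_image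
    {F : Finset (Finset α) | (∀ S ∈ F, T S) ∧ LaminarF F ∧ LinearIndepOn K χ (F : Set (Finset α))}
    card ⟨∅, mem_filter.2 ⟨mem_univ _, by simp [LaminarF]⟩⟩
  obtain ⟨hFT, hFlam, hFind⟩ := (mem_filter.1 hFmem).2
  refine ⟨F, hFT, hFlam, hFind, fun S hS => ?_⟩
  -- Induction on the number of members of `F` not laminar with `S`. If there is none, maximality of
  -- `F` puts `χ S` in the span; otherwise uncrossing `S` with such a member `A` gives `X`, `Y` with
  -- `χ S = χ X + χ Y - χ A`, each of which is laminar with strictly more members of `F`.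
  induction hn : #{B ∈ F | ¬LaminarPair B S} using Nat.strong_induction_on generalizing S with
  | _ n ih =>
  by_cases hχ : χ S = 0
  · exact hχ ▸ zero_mem _
  by_cases hlam : ∀ A ∈ F, LaminarPair A S
  · by_contra hspan
    have hSF : S ∉ F := fun h => hspan (subset_span ⟨S, h, rfl⟩)
    have hins := hFmax (insert S F) <| mem_filter.2 ⟨mem_univ _,
      forall_mem_insert _ _ _ |>.2 ⟨hS, hFT⟩, laminarF_insert hFlam hlam,
      coe_insert S F ▸ hFind.insert hspan⟩
    rw [card_insert_of_notMem hSF] at hins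
    omega
  push Not at hlam
  obtain ⟨A, hA, hAS⟩ := hlam
  have lt : ∀ X, LaminarPair A X → (∀ B, LaminarPair B A → LaminarPair B S → LaminarPair B X) →
      #{B ∈ F | ¬LaminarPair B X} < n :=
    fun X hAX hX => hn ▸ card_filter_not_laminarPair_lt hFlam hA hAS hAX hX
  obtain ⟨X, Y, hX, hY, hXY, hXn, hYn⟩ : ∃ X Y, T X ∧ T Y ∧ χ X + χ Y = χ A + χ S ∧
      #{B ∈ F | ¬LaminarPair B X} < n ∧ #{B ∈ F | ¬LaminarPair B Y} < n := by
    rcases huncross A S (hFT A hA) hS (hFind.ne_zero hA) hχ hAS with ⟨h1, h2, h3⟩ | ⟨h1, h2, h3⟩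
    · exact ⟨_, _, h1, h2, h3,
        lt _ (.inr (.inr inter_subset_left)) fun B hBA hBS => (hBA.corners hAS hBS).1,
        lt _ (.inr (.inl subset_union_left)) fun B hBA hBS => (hBA.corners hAS hBS).2.1⟩
    · exact ⟨_, _, h1, h2, h3,
        lt _ (.inr (.inr sdiff_subset)) fun B hBA hBS => (hBA.corners hAS hBS).2.2.1,
        lt _ (.inl disjoint_sdiff) fun B hBA hBS => (hBA.corners hAS hBS).2.2.2⟩
  rw [eq_sub_of_add_eq' hXY.symm]
  exact sub_mem (add_mem (ih _ hXn X hX rfl) (ih _ hYn Y hY rfl))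
    (subset_span ⟨A, hA, rfl⟩)

end Laminar

lemma crosses_of_not_laminarPair {A B : Finset V} {r : V} (hA : r ∉ A) (hB : r ∉ B)
    (h : ¬LaminarPair A B) : Crosses A B := by
  simp only [LaminarPair, not_or] at h
  exact ⟨not_disjoint_iff_nonempty_inter.1 h.1, sdiff_nonempty.2 h.2.1, sdiff_nonempty.2 h.2.2,
    ⟨r, by simp [hA, hB]⟩⟩

lemma eq_zero_of_eventually_add_smul_mem_extremePoints {M : Type*} [AddCommGroup M] [Module ℝ M]
    {P : Set M} {x d : M} (hx : x ∈ P.extremePoints ℝ) (h : ∀ᶠ s in 𝓝 (0 : ℝ), x + s • d ∈ P) :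
    d = 0 := by
  obtain ⟨ε, hε, hball⟩ := Metric.eventually_nhds_iff.1 h
  have hmem : ∀ s : ℝ, |s| < ε → x + s • d ∈ P := fun s hs => hball (by simpa using hs)
  have hε' : |ε / 2| < ε := by rw [abs_of_pos (half_pos hε)]; linarith
  have hseg : x ∈ openSegment ℝ (x + (ε / 2) • d) (x + (-(ε / 2)) • d) :=
    ⟨1 / 2, 1 / 2, by norm_num, by norm_num, by norm_num, by module⟩
  have hfix := ((mem_extremePoints.1 hx).2 _ (hmem _ hε') _ (hmem _ (by rwa [abs_neg])) hseg).1
  exact (smul_eq_zero.1 (add_eq_left.1 hfix)).resolve_left (half_pos hε).ne'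

lemma exists_ne_zero_forall_dotProduct_eq_zero {K ι : Type*} [Field K] [Fintype ι] [DecidableEq ι]
    {s : Set (ι → K)} (hs : span K s ≠ ⊤) : ∃ d ≠ 0, ∀ v ∈ s, v ⬝ᵥ d = 0 := by
  obtain ⟨φ, hφ, hle⟩ := (span K s).exists_le_ker_of_lt_top (lt_top_iff_ne_top.2 hs)
  refine ⟨(dotProductEquiv K ι).symm φ, by simpa using hφ, fun v hv => ?_⟩
  rw [dotProduct_comm, ← dotProductEquiv_apply_apply, LinearEquiv.apply_symm_apply]
  exact LinearMap.mem_ker.1 (hle (subset_span hv))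

section Extreme

variable {k : ℤ} {I H : V → V → ℕ} {U : Finset V} {ends : E → V × V} {x : E → ℝ}

lemma eventually_add_smul_mem_polyP (hxP : x ∈ polyP k I H U ends)
    (hxe : ∀ e, 0 < x e ∧ x e < 1) {d : E → ℝ}
    (hd : ∀ S, IsCut S → IsTight k I H U ends x S → chiCut ends S ⬝ᵥ d = 0) :
    ∀ᶠ s in 𝓝 (0 : ℝ), x + s • d ∈ polyP k I H U ends := by
  have hbox : ∀ e, ∀ᶠ s in 𝓝 (0 : ℝ), 0 ≤ (x + s • d) e ∧ (x + s • d) e ≤ 1 := fun e => by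
    have hc : ContinuousAt (fun s : ℝ => (x + s • d) e) 0 := by fun_prop
    exact (hc.eventually_mem (Icc_mem_nhds (by simpa using (hxe e).1) (by simpa using (hxe e).2)))
  have hcut : ∀ S, ∀ᶠ s in 𝓝 (0 : ℝ),
      IsCut S → (fRes k I H U S : ℝ) ≤ ∑ e ∈ cutEdges ends S, (x + s • d) e := fun S => by
    by_cases hS : IsCut S
    · by_cases ht : IsTight k I H U ends x S
      · refine Eventually.of_forall fun s _ => le_of_eq ?_
        rw [← chiCut_dotProduct, dotProduct_add, dotProduct_smul, hd S hS ht, chiCut_dotProduct, ht]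
        simp
      · have hlt := lt_of_le_of_ne (hxP.2 S hS) (Ne.symm ht)
        have hc : ContinuousAt (fun s : ℝ => ∑ e ∈ cutEdges ends S, (x + s • d) e) 0 := by
          fun_prop
        exact (continuousAt_const.eventually_lt hc (by simpa using hlt)).mono fun s hs _ => hs.le
    · exact Eventually.of_forall fun s h => absurd h hS
  filter_upwards [eventually_all.2 hbox, eventually_all.2 hcut] with s h1 h2 using ⟨h1, h2⟩

lemma span_chiCut_tight_eq_top (hx : x ∈ (polyP k I H U ends).extremePoints ℝ)
    (hxe : ∀ e, 0 < x e ∧ x e < 1) :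
    span ℝ (chiCut ends '' {S | IsCut S ∧ IsTight k I H U ends x S}) = ⊤ := by
  by_contra h
  obtain ⟨d, hd0, hd⟩ := exists_ne_zero_forall_dotProduct_eq_zero h
  exact hd0 (eq_zero_of_eventually_add_smul_mem_extremePoints hx
    (eventually_add_smul_mem_polyP hx.1 hxe fun S hS ht => hd _ ⟨S, ⟨hS, ht⟩, rfl⟩))

lemma span_chiCut_tight_not_mem_eq_top (hI : ∀ a b, I a b = I b a)
    (hH : ∀ a b, H a b = H b a) (hx : x ∈ (polyP k I H U ends).extremePoints ℝ)
    (hxe : ∀ e, 0 < x e ∧ x e < 1) (r : V) :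
    span ℝ (chiCut ends '' {S | IsCut S ∧ IsTight k I H U ends x S ∧ r ∉ S}) = ⊤ := by
  refine top_unique ((span_chiCut_tight_eq_top hx hxe).ge.trans (span_mono ?_))
  rintro _ ⟨S, ⟨hS, ht⟩, rfl⟩
  by_cases hr : r ∈ S
  · exact ⟨Sᶜ, ⟨hS.compl, ht.compl hI hH, by simpa using hr⟩, chiCut_compl ends S⟩
  · exact ⟨S, ⟨hS, ht, hr⟩, rfl⟩

end Extreme

/-- Lemma 4.3: if no laminar `x`-defining family exists for an extreme point `x` of `P`,
then there are crossing `f`-positive `x`-tight cuts `A`, `B` such that `A ∩ B` or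
`V \ (A ∪ B)` is a singleton of `U`, and `A \ B` or `B \ A` is a singleton of `U`. -/
theorem no_laminar_defining_family_gives_crossing_tight_cuts
    (k : ℤ) (I H : V → V → ℕ)
    (hIsymm : ∀ a b, I a b = I b a) (hHsymm : ∀ a b, H a b = H b a)
    (U : Finset V) (ends : E → V × V) [Nonempty E]
    (x : E → ℝ) (hx : x ∈ (polyP k I H U ends).extremePoints ℝ)
    (hxe : ∀ e, 0 < x e ∧ x e < 1)
    (hnolam : ¬ ∃ L : Finset (Finset V), LaminarF L ∧ IsDefining k I H U ends x L) :
    ∃ A B : Finset V,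
      IsCut A ∧ IsCut B ∧
      0 < fRes k I H U A ∧ 0 < fRes k I H U B ∧
      IsTight k I H U ends x A ∧ IsTight k I H U ends x B ∧
      Crosses A B ∧
      (∃ u ∈ U, A ∩ B = {u} ∨ (A ∪ B)ᶜ = {u}) ∧
      (∃ v ∈ U, A \ B = {v} ∨ B \ A = {v}) := by
  by_contra hcross
  obtain ⟨e₀⟩ := ‹Nonempty E›
  set r := (ends e₀).1
  have hx0 : ∀ e, 0 < x e := fun e => (hxe e).1
  obtain ⟨F, hFT, hFlam, hFind, hFspan⟩ := exists_laminarF_linearIndepOn_forall_mem_span (K := ℝ)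
    (fun S => IsCut S ∧ IsTight k I H U ends x S ∧ r ∉ S) (chiCut ends)
    fun A B ⟨hAcut, hA, hrA⟩ ⟨hBcut, hB, hrB⟩ hχA hχB hAB => by
      have hcr := crosses_of_not_laminarPair hrA hrB hAB
      obtain ⟨hcInter, hcUnion, hcSdiff, hcSdiff'⟩ := hcr.isCut_corners
      have hU := fun h => hcross ⟨A, B, hAcut, hBcut, fRes_pos_of_isTight hx0 hA hχA,
        fRes_pos_of_isTight hx0 hB hχB, hA, hB, hcr, h⟩
      rcases hA.uncross_of_crosses hIsymm hHsymm hx.1 hx0 hcr hB hU with ⟨h1, h2, h3⟩ | ⟨h1, h2, h3⟩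
      · exact .inl ⟨⟨hcInter, h1, by simp [hrA]⟩, ⟨hcUnion, h2, by simp [hrA, hrB]⟩, h3⟩
      · exact .inr ⟨⟨hcSdiff, h1, by simp [hrA]⟩, ⟨hcSdiff', h2, by simp [hrB]⟩, h3⟩
  have hspan : span ℝ (chiCut ends '' F) = ⊤ :=
    top_unique <| (span_chiCut_tight_not_mem_eq_top hIsymm hHsymm hx hxe r).ge.trans
      (span_le.2 <| by rintro _ ⟨S, hS, rfl⟩; exact hFspan S hS)
  refine hnolam ⟨F, hFlam, fun S hS => ⟨(hFT S hS).1,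
    fRes_pos_of_isTight hx0 (hFT S hS).2.1 (hFind.ne_zero hS), (hFT S hS).2.1⟩, ?_, hFind⟩
  have hcard := finrank_span_eq_card hFind
  rw [← Set.image_eq_range, hspan, finrank_top, Module.finrank_fintype_fun_eq_card] at hcard
  simpa using hcard.symm
end

section
/- Let V be a finite set, J and H multigraphs on V, k an integer, R ⊆ V, and T a nonempty proper subset of V\R (so (V\R)\T ≠ ∅). Assume: (a) if d_H(T, (V\R)\T) ≥ 1 then d_J(T, (V\R)\T) ≥ ⌈(k−1)/2⌉; (b) d_J(T) ≥ k − d_H(T) − 1 and d_J((V\R)\T) ≥ k − d_H((V\R)\T) − 1; (c) d_J(R) ≤ k − d_H(R) + 2. Then 2·d_J(T, (V\R)\T) ≥ k − 4, i.e., d_J(T, (V\R)\T) ≥ ⌈(k−4)/2⌉. -/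
open Finset

variable {V : Type*} [Fintype V] [DecidableEq V]

/-! For the partition `V = T ⊔ B ⊔ R`, `B = (V \ R) \ T`, the cut identity `d(T) + d(B) = d(R) + 2 d(T,B)`
holds for `J` and `H` alike. Adding hypotheses (b) and (c) therefore gives
`k - 4 ≤ 2 d_J(T,B) + 2 d_H(T,B)`, which is the claim when `d_H(T,B) = 0`; otherwise (a) gives
the stronger bound `k - 1 ≤ 2 d_J(T,B)`. -/

theorem dBetween_comm {m : V → V → ℕ} (hm : ∀ a b, m a b = m b a) (S T : Finset V) :
    dBetween m S T = dBetween m T S := by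
  unfold dBetween
  rw [Finset.sum_comm]
  exact sum_congr rfl fun u _ => sum_congr rfl fun v _ => hm v u

theorem dBetween_union_right (m : V → V → ℕ) (S : Finset V) {A B : Finset V}
    (hAB : Disjoint A B) : dBetween m S (A ∪ B) = dBetween m S A + dBetween m S B := by
  simp only [dBetween, sum_union hAB, sum_add_distrib]

theorem degS_add_degS {m : V → V → ℕ} (hm : ∀ a b, m a b = m b a) {X Y : Finset V}
    (hXY : Disjoint X Y) :
    degS m X + degS m Y = degS m (X ∪ Y)ᶜ + 2 * dBetween m X Y := by
  have hX : Xᶜ = Y ∪ (X ∪ Y)ᶜ := by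
    rw [compl_union, union_inter_distrib_left, union_compl, inter_univ,
      union_eq_right.2 hXY.le_compl_left]
  have hY : Yᶜ = X ∪ (X ∪ Y)ᶜ := by
    rw [compl_union, union_inter_distrib_left, union_compl, univ_inter,
      union_eq_right.2 hXY.le_compl_right]
  have hZ : Disjoint Y (X ∪ Y)ᶜ := disjoint_compl_right.mono_left subset_union_right
  have hZ' : Disjoint X (X ∪ Y)ᶜ := disjoint_compl_right.mono_left subset_union_left
  rw [degS, degS, degS, compl_compl, hX, hY, dBetween_union_right _ _ hZ,
    dBetween_union_right _ _ hZ', dBetween_union_right _ _ hXY,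
    dBetween_comm hm Y X, dBetween_comm hm (X ∪ Y)ᶜ X, dBetween_comm hm (X ∪ Y)ᶜ Y]
  ring

theorem degS_add_degS_sdiff {m : V → V → ℕ} (hm : ∀ a b, m a b = m b a) {R T : Finset V}
    (hTR : T ⊆ Rᶜ) :
    degS m T + degS m (Rᶜ \ T) = degS m R + 2 * dBetween m T (Rᶜ \ T) := by
  rw [degS_add_degS hm disjoint_sdiff, union_sdiff_of_subset hTR, compl_compl]

theorem Int.ceil_half_le_iff (a d : ℤ) : ⌈(a : ℚ) / 2⌉ ≤ d ↔ a ≤ 2 * d := by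
  rw [Int.ceil_le, div_le_iff₀ two_pos, mul_comm]
  exact_mod_cast Iff.rfl

theorem edges_outside_contracted_set'_general
    (J H : V → V → ℕ)
    (hJsymm : ∀ a b, J a b = J b a) (hHsymm : ∀ a b, H a b = H b a)
    (k : ℤ) (R T : Finset V)
    (hTR : T ⊆ Rᶜ)
    (ha : 1 ≤ dBetween H T (Rᶜ \ T) →
      ⌈((k : ℚ) - 1) / 2⌉ ≤ (dBetween J T (Rᶜ \ T) : ℤ))
    (hb1 : k - (degS H T : ℤ) - 1 ≤ (degS J T : ℤ))
    (hb2 : k - (degS H (Rᶜ \ T) : ℤ) - 1 ≤ (degS J (Rᶜ \ T) : ℤ))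
    (hc : (degS J R : ℤ) ≤ k - (degS H R : ℤ) + 2) :
    k - 4 ≤ 2 * (dBetween J T (Rᶜ \ T) : ℤ) ∧
      ⌈((k : ℚ) - 4) / 2⌉ ≤ (dBetween J T (Rᶜ \ T) : ℤ) := by
  have hJ := degS_add_degS_sdiff hJsymm hTR
  have hH := degS_add_degS_sdiff hHsymm hTR
  have key : k - 4 ≤ 2 * (dBetween J T (Rᶜ \ T) : ℤ) := by
    rcases Nat.eq_zero_or_pos (dBetween H T (Rᶜ \ T)) with hH0 | hHpos
    · omega
    · have := (Int.ceil_half_le_iff (k - 1) _).1 (by exact_mod_cast ha hHpos)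
      omega
  exact ⟨key, by exact_mod_cast (Int.ceil_half_le_iff (k - 4) _).2 key⟩

/-- Lemma 5.5: for a contracted set `R` and a nonempty proper subset `T` of `V \ R`,
`d_J(T, (V \ R) \ T) ≥ ⌈(k-4)/2⌉`. -/
theorem edges_outside_contracted_set'
    (J H : V → V → ℕ)
    (hJsymm : ∀ a b, J a b = J b a) (hHsymm : ∀ a b, H a b = H b a)
    (k : ℤ) (R T : Finset V)
    (hTR : T ⊆ Rᶜ) (hTne : T.Nonempty) (hTprop : T ≠ Rᶜ)
    (ha : 1 ≤ dBetween H T (Rᶜ \ T) →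
      ⌈((k : ℚ) - 1) / 2⌉ ≤ (dBetween J T (Rᶜ \ T) : ℤ))
    (hb1 : k - (degS H T : ℤ) - 1 ≤ (degS J T : ℤ))
    (hb2 : k - (degS H (Rᶜ \ T) : ℤ) - 1 ≤ (degS J (Rᶜ \ T) : ℤ))
    (hc : (degS J R : ℤ) ≤ k - (degS H R : ℤ) + 2) :
    k - 4 ≤ 2 * (dBetween J T (Rᶜ \ T) : ℤ) ∧
      ⌈((k : ℚ) - 4) / 2⌉ ≤ (dBetween J T (Rᶜ \ T) : ℤ) :=
  edges_outside_contracted_set'_general J H hJsymm hHsymm k R T hTR ha hb1 hb2 hc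
end
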